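/- arXiv:2505.17562 — 2 statements merged into one kernel-verified Lean document; each statement's English description precedes it below -/
import Mathlib

section
/- Let Ω ⊂ ℝ^d be open and connected, and let B be continuous on the closure of Ω with values in ℝ^{n×d×n}. For x ∈ Ω, let E_B^x := { v ∈ ℝ^n : for all y ∈ Ω and all γ_1, γ_2 ∈ Γ(x,y), R^{γ_1}_B(v) = R^{γ_2}_B(v) }, a linear subspace of ℝ^n. Then the dimension of E_B^x does not depend on x: for all x_1, x_2 ∈ Ω, dim E_B^{x_1} = dim E_B^{x_2}. -/
open MeasureTheory Metric Set
open scoped ENNReal NNReal BigOperators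

noncomputable section

/-- Points of `ℝ^d`. -/
abbrev Pt (d : ℕ) := EuclideanSpace ℝ (Fin d)

/-- A `C¹` curve in `Ω` from `x` to `y`, parametrized on `[0,1]`. -/
def IsCurve {d : ℕ} (Ω : Set (Pt d)) (x y : Pt d) (γ : ℝ → Pt d) : Prop :=
  ContDiffOn ℝ 1 γ (Set.Icc 0 1) ∧ (∀ t ∈ Set.Icc (0:ℝ) 1, γ t ∈ Ω) ∧ γ 0 = x ∧ γ 1 = y

/-- `φ` solves the transport ODE `φ' = -((B∘γ)·φ)·γ'` on `[0,1]`. -/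
def SolvesTransport {d n : ℕ} (B : Pt d → Fin n → Fin d → Fin n → ℝ)
    (γ : ℝ → Pt d) (φ : ℝ → Fin n → ℝ) : Prop :=
  ∀ t ∈ Set.Icc (0:ℝ) 1, HasDerivWithinAt φ
    (fun i => - ∑ j, ∑ k, B (γ t) i j k * φ t k * (derivWithin γ (Set.Icc 0 1) t) j)
    (Set.Icc 0 1) t

/-- The relation `R^γ_B(v) = w`: a solution of the transport ODE joins `v` to `w`. -/
def Transports {d n : ℕ} (B : Pt d → Fin n → Fin d → Fin n → ℝ)
    (γ : ℝ → Pt d) (v w : Fin n → ℝ) : Prop :=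
  ∃ φ : ℝ → Fin n → ℝ, SolvesTransport B γ φ ∧ φ 0 = v ∧ φ 1 = w

/-- The set `E_B^x` of vectors whose transport along curves starting at `x` depends only on
the end point: `R^{γ₁}_B(v) = R^{γ₂}_B(v)` for all `y ∈ Ω` and all curves `γ₁, γ₂` from `x`
to `y`. -/
def EB {d n : ℕ} (Ω : Set (Pt d)) (B : Pt d → Fin n → Fin d → Fin n → ℝ)
    (x : Pt d) : Set (Fin n → ℝ) :=
  {v | ∀ y ∈ Ω, ∀ γ₁ γ₂ : ℝ → Pt d, IsCurve Ω x y γ₁ → IsCurve Ω x y γ₂ →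
    ∀ w₁ w₂ : Fin n → ℝ, Transports B γ₁ v w₁ → Transports B γ₂ v w₂ → w₁ = w₂}

set_option linter.unusedSectionVars false
set_option linter.unusedVariables false

section FB
variable {d n : ℕ} (B : Pt d → Fin n → Fin d → Fin n → ℝ)

/-- The transport vector field. -/
def Fb (p : Pt d) (u : Pt d) (z : Fin n → ℝ) : Fin n → ℝ :=
  fun i => - ∑ j, ∑ k, B p i j k * z k * u j

theorem Fb_smul_add (p u : Pt d) (a : ℝ) (z w : Fin n → ℝ) :
    Fb B p u (a • z + w) = a • Fb B p u z + Fb B p u w := by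
  funext i
  simp only [Fb, Pi.add_apply, Pi.smul_apply, smul_eq_mul]
  have h : ∀ j, ∀ k, B p i j k * (a * z k + w k) * u j
      = a * (B p i j k * z k * u j) + B p i j k * w k * u j := by intro j k; ring
  simp_rw [h, Finset.sum_add_distrib, ← Finset.mul_sum]
  ring

theorem Fb_smul_right (p : Pt d) (a : ℝ) (u : Pt d) (z : Fin n → ℝ) :
    Fb B p (a • u) z = a • Fb B p u z := by
  funext i
  simp only [Fb, Pi.smul_apply, smul_eq_mul, Finset.mul_sum, mul_neg, PiLp.smul_apply]
  congr 1
  apply Finset.sum_congr rfl; intro j _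
  apply Finset.sum_congr rfl; intro k _
  ring

theorem Fb_zero_right (p : Pt d) (z : Fin n → ℝ) : Fb B p (0 : Pt d) z = 0 := by
  have := Fb_smul_right B p 0 0 z
  simpa using this

theorem Fb_sub (p u : Pt d) (z w : Fin n → ℝ) :
    Fb B p u z - Fb B p u w = Fb B p u (z - w) := by
  funext i
  simp only [Fb, Pi.sub_apply]
  have h : ∀ j, ∀ k, B p i j k * (z k - w k) * u j
      = B p i j k * z k * u j - B p i j k * w k * u j := by intro j k; ring
  simp_rw [h, Finset.sum_sub_distrib]
  ring

theorem norm_Fb_le (p u : Pt d) (z : Fin n → ℝ) :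
    ‖Fb B p u z‖ ≤ (∑ i, ∑ j, ∑ k, |B p i j k * u j|) * ‖z‖ := by
  have hnn : (0:ℝ) ≤ (∑ i, ∑ j, ∑ k, |B p i j k * u j|) * ‖z‖ := by positivity
  rw [pi_norm_le_iff_of_nonneg hnn]
  intro i
  have h1 : ‖Fb B p u z i‖ ≤ ∑ j, ∑ k, |B p i j k * z k * u j| := by
    rw [Fb]
    calc ‖-∑ j, ∑ k, B p i j k * z k * u j‖ = |∑ j, ∑ k, B p i j k * z k * u j| := by
          rw [Real.norm_eq_abs, abs_neg]
      _ ≤ ∑ j, |∑ k, B p i j k * z k * u j| := Finset.abs_sum_le_sum_abs _ _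
      _ ≤ ∑ j, ∑ k, |B p i j k * z k * u j| :=
          Finset.sum_le_sum fun j _ => Finset.abs_sum_le_sum_abs _ _
  refine h1.trans ?_
  have h2 : ∀ j k, |B p i j k * z k * u j| ≤ |B p i j k * u j| * ‖z‖ := by
    intro j k
    rw [show B p i j k * z k * u j = (B p i j k * u j) * z k by ring, abs_mul]
    exact mul_le_mul_of_nonneg_left ((Real.norm_eq_abs (z k)) ▸ norm_le_pi_norm z k)
      (abs_nonneg _)
  calc (∑ j, ∑ k, |B p i j k * z k * u j|) ≤ ∑ j, ∑ k, |B p i j k * u j| * ‖z‖ :=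
        Finset.sum_le_sum fun j _ => Finset.sum_le_sum fun k _ => h2 j k
    _ = (∑ j, ∑ k, |B p i j k * u j|) * ‖z‖ := by rw [Finset.sum_mul]; congr 1; funext j; rw [Finset.sum_mul]
    _ ≤ (∑ i, ∑ j, ∑ k, |B p i j k * u j|) * ‖z‖ := by
        apply mul_le_mul_of_nonneg_right _ (norm_nonneg z)
        exact Finset.single_le_sum (f := fun i => ∑ j, ∑ k, |B p i j k * u j|)
          (fun i _ => by positivity) (Finset.mem_univ i)
end FB

theorem Fb_zero {d n : ℕ} (B : Pt d → Fin n → Fin d → Fin n → ℝ) (p u : Pt d) :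
    Fb B p u (0 : Fin n → ℝ) = 0 := by
  funext i; simp [Fb]

theorem glueDeriv {F : Type*} [NormedAddCommGroup F] [NormedSpace ℝ F]
    {a b c : ℝ} (hab : a ≤ b) (hbc : b ≤ c) {f : ℝ → F} {g : ℝ → F}
    (h1 : ∀ t ∈ Icc a b, HasDerivWithinAt f (g t) (Icc a b) t)
    (h2 : ∀ t ∈ Icc b c, HasDerivWithinAt f (g t) (Icc b c) t) :
    ∀ t ∈ Icc a c, HasDerivWithinAt f (g t) (Icc a c) t := by
  intro t ht
  rcases lt_trichotomy t b with h|h|h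
  · apply (h1 t ⟨ht.1, h.le⟩).mono_of_mem_nhdsWithin
    apply mem_nhdsWithin.2 ⟨Iio b, isOpen_Iio, h, ?_⟩
    rintro x ⟨hx1, hx2⟩; exact ⟨hx2.1, le_of_lt hx1⟩
  · subst h
    exact ((h1 t ⟨ht.1, le_refl _⟩).union (h2 t ⟨le_refl _, ht.2⟩)).mono
      (Icc_subset_Icc_union_Icc)
  · apply (h2 t ⟨h.le, ht.2⟩).mono_of_mem_nhdsWithin
    apply mem_nhdsWithin.2 ⟨Ioi b, isOpen_Ioi, h, ?_⟩
    rintro x ⟨hx1, hx2⟩; exact ⟨le_of_lt hx1, hx2.2⟩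

theorem contDiffOn_Icc_of_deriv {F : Type*} [NormedAddCommGroup F] [NormedSpace ℝ F]
    {a b : ℝ} (hab : a < b) {f g : ℝ → F}
    (hg : ContinuousOn g (Icc a b))
    (hd : ∀ t ∈ Icc a b, HasDerivWithinAt f (g t) (Icc a b) t) :
    ContDiffOn ℝ 1 f (Icc a b) := by
  have hu := uniqueDiffOn_Icc hab
  rw [show (1:WithTop ℕ∞) = 0 + 1 from rfl, contDiffOn_succ_iff_derivWithin hu]
  refine ⟨fun t ht => (hd t ht).differentiableWithinAt, by simp, ?_⟩
  rw [contDiffOn_zero]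
  apply hg.congr
  intro t ht; exact (hd t ht).derivWithin (hu t ht)

theorem continuousOn_union_closed {F : Type*} [NormedAddCommGroup F]
    {g : ℝ → F} {s t : Set ℝ} (hs : IsClosed s) (ht : IsClosed t)
    (hf : ContinuousOn g s) (hg : ContinuousOn g t) : ContinuousOn g (s ∪ t) := by
  intro x hx
  rcases hx with hx | hx
  · by_cases hxt : x ∈ t
    · exact (hf x hx).union (hg x hxt)
    · refine (hf x hx).union ?_
      exact continuousWithinAt_of_notMem_closure (by rwa [ht.closure_eq])
  · by_cases hxs : x ∈ s
    · exact (hf x hxs).union (hg x hx)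
    · refine ContinuousWithinAt.union ?_ (hg x hx)
      exact continuousWithinAt_of_notMem_closure (by rwa [hs.closure_eq])

section VF
variable {d n : ℕ}

def cl (t : ℝ) : ℝ := max 0 (min 1 t)

theorem cl_mem (t : ℝ) : cl t ∈ Icc (0:ℝ) 1 :=
  ⟨le_max_left _ _, max_le (by norm_num) (min_le_left _ _)⟩

theorem cl_eq {t : ℝ} (h : t ∈ Icc (0:ℝ) 1) : cl t = t := by
  have := h.1; have := h.2
  unfold cl
  rw [min_eq_right h.2, max_eq_right h.1]

theorem continuous_cl : Continuous cl :=
  continuous_const.max (continuous_const.min continuous_id)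

variable (B : Pt d → Fin n → Fin d → Fin n → ℝ) (γ : ℝ → Pt d)

def vf : ℝ → (Fin n → ℝ) → (Fin n → ℝ) :=
  fun t z => Fb B (γ (cl t)) (derivWithin γ (Icc 0 1) (cl t)) z

theorem solves_iff (φ : ℝ → Fin n → ℝ) : SolvesTransport B γ φ ↔
    ∀ t ∈ Icc (0:ℝ) 1, HasDerivWithinAt φ (vf B γ t (φ t)) (Icc 0 1) t := by
  unfold SolvesTransport
  apply forall₂_congr
  intro t ht
  have h : vf B γ t (φ t) = (fun i => - ∑ j, ∑ k, B (γ t) i j k * φ t k *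
      (derivWithin γ (Set.Icc 0 1) t) j) := by
    unfold vf Fb; rw [cl_eq ht]
  rw [h]

variable {Ω : Set (Pt d)} {x y : Pt d}
variable (hγ : IsCurve Ω x y γ) (hB : ContinuousOn B (closure Ω))

include hγ in
theorem cont_gcl : Continuous (fun t => γ (cl t)) :=
  hγ.1.continuousOn.comp_continuous continuous_cl cl_mem

include hγ hB in
theorem cont_Bcl : Continuous (fun t => B (γ (cl t))) :=
  hB.comp_continuous (cont_gcl γ hγ) (fun t => subset_closure (hγ.2.1 _ (cl_mem t)))

include hγ in
theorem cont_dcl : Continuous (fun t => derivWithin γ (Icc 0 1) (cl t)) :=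
  (hγ.1.continuousOn_derivWithin (uniqueDiffOn_Icc (by norm_num)) le_rfl).comp_continuous
    continuous_cl cl_mem

include hγ hB in
theorem cont_vf (z : Fin n → ℝ) : Continuous (fun t => vf B γ t z) := by
  unfold vf Fb
  apply continuous_pi; intro i
  apply Continuous.neg
  apply continuous_finset_sum; intro j _
  apply continuous_finset_sum; intro k _
  exact ((((continuous_apply k).comp ((continuous_apply j).comp
    ((continuous_apply i).comp (cont_Bcl B γ hγ hB)))).mul continuous_const).mul
    ((PiLp.continuous_apply (p := 2) (β := fun _ => ℝ) j).comp (cont_dcl γ hγ)))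

include hγ hB in
theorem exists_lipschitz : ∃ K : ℝ≥0, ∀ t, LipschitzWith K (vf B γ t) := by
  set m : ℝ → ℝ := fun t => ∑ i, ∑ j, ∑ k,
    |B (γ (cl t)) i j k * (derivWithin γ (Icc 0 1) (cl t)) j| with hm
  have hmc : Continuous m := by
    apply continuous_finset_sum; intro i _
    apply continuous_finset_sum; intro j _
    apply continuous_finset_sum; intro k _
    apply Continuous.abs
    exact (((continuous_apply k).comp ((continuous_apply j).comp
      ((continuous_apply i).comp (cont_Bcl B γ hγ hB)))).mul
      ((PiLp.continuous_apply (p := 2) (β := fun _ => ℝ) j).comp (cont_dcl γ hγ)))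
  obtain ⟨K0, hK0⟩ := isCompact_Icc.exists_bound_of_continuousOn
    (s := Icc (0:ℝ) 1) hmc.continuousOn
  have hmK : ∀ t, m t ≤ K0 := by
    intro t
    have h1 : m t = m (cl t) := by
      simp only [hm]
      rw [cl_eq (cl_mem t)]
    rw [h1]
    exact (le_abs_self _).trans ((Real.norm_eq_abs _) ▸ hK0 _ (cl_mem t))
  refine ⟨Real.toNNReal K0, fun t => ?_⟩
  apply LipschitzWith.of_dist_le_mul
  intro z w
  rw [dist_eq_norm, dist_eq_norm]
  have h2 : vf B γ t z - vf B γ t w = Fb B (γ (cl t)) (derivWithin γ (Icc 0 1) (cl t)) (z - w) :=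
    Fb_sub B _ _ z w
  rw [h2]
  calc ‖Fb B (γ (cl t)) (derivWithin γ (Icc 0 1) (cl t)) (z - w)‖
      ≤ m t * ‖z - w‖ := norm_Fb_le B _ _ _
    _ ≤ (Real.toNNReal K0 : ℝ) * ‖z - w‖ :=
        mul_le_mul_of_nonneg_right ((hmK t).trans (Real.le_coe_toNNReal K0)) (norm_nonneg _)

include hγ hB in
theorem vf_exists (v : Fin n → ℝ) :
    ∃ φ : ℝ → Fin n → ℝ, φ 0 = v ∧
      ∀ t ∈ Icc (0:ℝ) 1, HasDerivWithinAt φ (vf B γ t (φ t)) (Icc 0 1) t := by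
  obtain ⟨K, hK⟩ := exists_lipschitz B γ hγ hB
  have hbound : ∀ t z, ‖vf B γ t z‖ ≤ (K:ℝ) * ‖z‖ := by
    intro t z
    have h5 := (hK t).dist_le_mul z 0
    have h0 : vf B γ t 0 = 0 := Fb_zero B _ _
    rwa [dist_eq_norm, h0, sub_zero, dist_zero_right] at h5
  set h : ℝ := 1/(2*((K:ℝ)+1)) with hh
  have hK0 : (0:ℝ) ≤ K := K.2
  have hh0 : 0 < h := by rw [hh]; positivity
  -- local existence step
  have step : ∀ a ∈ Ico (0:ℝ) 1, ∀ w : Fin n → ℝ, ∃ ψ : ℝ → Fin n → ℝ, ψ a = w ∧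
      ∀ t ∈ Icc a (min (a+h) 1), HasDerivWithinAt ψ (vf B γ t (ψ t)) (Icc a (min (a+h) 1)) t := by
    intro a ha w
    set b := min (a+h) 1 with hbdef
    have hab : a ≤ b := le_min (by linarith) ha.2.le
    have hpl : IsPicardLindelof (vf B γ) (tmin := a) (tmax := b) ⟨a, le_refl a, hab⟩ w
        (‖w‖₊+1) 0 (K*(2*‖w‖₊+1)) K := by
      refine ⟨fun t _ => (hK t).lipschitzOnWith,
        fun z _ => (cont_vf B γ hγ hB z).continuousOn, ?_, ?_⟩
      · intro t _ z hz
        push_cast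
        have h1 := hbound t z
        have h2 : ‖z‖ ≤ 2*‖w‖+1 := by
          have h3 : ‖z - w‖ ≤ ‖w‖ + 1 := by
            have := mem_closedBall_iff_norm.mp hz; push_cast at this; exact this
          have h4 : ‖z‖ - ‖w‖ ≤ ‖z - w‖ := norm_sub_norm_le z w
          linarith
        calc ‖vf B γ t z‖ ≤ (K:ℝ) * ‖z‖ := h1
          _ ≤ (K:ℝ)*(2*‖w‖+1) := by nlinarith
      · push_cast
        rw [sub_zero]
        have h1 : max (b - a) (a - a) ≤ h := by
          apply max_le _ (by linarith)
          have : b ≤ a + h := min_le_left _ _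
          linarith
        have h2 : (0:ℝ) ≤ max (b - a) (a - a) := le_max_of_le_right (by linarith)
        calc (K:ℝ)*(2*‖w‖+1) * max (b - a) (a - a) ≤ (K:ℝ)*(2*‖w‖+1) * h := by
              apply mul_le_mul_of_nonneg_left h1 (by positivity)
          _ ≤ ‖w‖ + 1 := by
              rw [hh, mul_one_div, div_le_iff₀ (by positivity)]
              nlinarith [norm_nonneg w]

    obtain ⟨f, hf0, hf⟩ := hpl.exists_eq_forall_mem_Icc_hasDerivWithinAt₀
    exact ⟨f, hf0, hf⟩
  -- induction on the number of steps
  have main : ∀ kk : ℕ, ∃ φ : ℝ → Fin n → ℝ, φ 0 = v ∧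
      ∀ t ∈ Icc (0:ℝ) (min (kk*h) 1),
        HasDerivWithinAt φ (vf B γ t (φ t)) (Icc 0 (min (kk*h) 1)) t := by
    intro kk
    induction kk with
    | zero =>
      obtain ⟨ψ, hψ0, hψ⟩ := step 0 ⟨le_rfl, zero_lt_one⟩ v
      refine ⟨ψ, hψ0, ?_⟩
      intro t ht
      have h0 : min ((0:ℕ)*h) 1 = (0:ℝ) := by norm_num
      rw [h0] at ht ⊢
      have ht' : t = 0 := le_antisymm ht.2 ht.1
      subst ht'
      have hb0 : (0:ℝ) ≤ min (0+h) 1 := le_min (by linarith) zero_le_one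
      exact (hψ 0 ⟨le_rfl, hb0⟩).mono (Icc_subset_Icc_right hb0)
    | succ k ih =>
      obtain ⟨φ, hφ0, hφ⟩ := ih
      by_cases hc : 1 ≤ (k:ℝ)*h
      · have h1 : min ((k:ℝ)*h) 1 = 1 := min_eq_right hc
        have h2 : min (((k:ℕ)+1:ℕ)*h) 1 = (1:ℝ) := by
          apply min_eq_right
          push_cast
          nlinarith
        refine ⟨φ, hφ0, ?_⟩
        rw [h1] at hφ
        rw [h2]
        exact hφ
      · push_neg at hc
        set c := min ((k:ℝ)*h) 1 with hcdef
        have hceq : c = (k:ℝ)*h := min_eq_left hc.le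
        have hc1 : c < 1 := by rw [hceq]; exact hc
        have hc0 : (0:ℝ) ≤ c := le_min (by positivity) zero_le_one
        obtain ⟨ψ, hψ0, hψ⟩ := step c ⟨hc0, hc1⟩ (φ c)
        set b := min (c+h) 1 with hbdef
        have hcb : c ≤ b := le_min (by linarith) hc1.le
        have hbk : min (((k:ℕ)+1:ℕ)*h) 1 = b := by
          rw [hbdef, hceq]
          push_cast
          ring_nf
        refine ⟨fun t => if t ≤ c then φ t else ψ t, ?_, ?_⟩
        · show (if (0:ℝ) ≤ c then φ 0 else ψ 0) = v
          rw [if_pos hc0]; exact hφ0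
        rw [hbk]
        apply glueDeriv hc0 hcb
        · intro t ht
          have heq : ∀ s ∈ Icc (0:ℝ) c, (fun t => if t ≤ c then φ t else ψ t) s = φ s := by
            intro s hs; exact if_pos hs.2
          have hval : vf B γ t ((fun t => if t ≤ c then φ t else ψ t) t) = vf B γ t (φ t) := by
            rw [heq t ht]
          rw [hval]
          exact (hφ t ht).congr heq (heq t ht)
        · intro t ht
          have heq : ∀ s ∈ Icc c b, (fun t => if t ≤ c then φ t else ψ t) s = ψ s := by
            intro s hs
            rcases eq_or_lt_of_le hs.1 with h'|h'
            · subst h'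
              show (if c ≤ c then φ c else ψ c) = ψ c
              rw [if_pos le_rfl, hψ0]
            · show (if s ≤ c then φ s else ψ s) = ψ s
              rw [if_neg (not_le.mpr h')]
          have hval : vf B γ t ((fun t => if t ≤ c then φ t else ψ t) t) = vf B γ t (ψ t) := by
            rw [heq t ht]
          rw [hval]
          exact (hψ t ht).congr heq (heq t ht)
  obtain ⟨k, hk⟩ := exists_nat_ge (1/h)
  obtain ⟨φ, hφ0, hφ⟩ := main k
  have h1 : min ((k:ℝ)*h) 1 = 1 := by
    apply min_eq_right
    rw [div_le_iff₀ hh0] at hk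
    linarith
  rw [h1] at hφ
  exact ⟨φ, hφ0, hφ⟩



include hγ hB in
theorem vf_unique {φ ψ : ℝ → Fin n → ℝ}
    (hφ : ∀ t ∈ Icc (0:ℝ) 1, HasDerivWithinAt φ (vf B γ t (φ t)) (Icc 0 1) t)
    (hψ : ∀ t ∈ Icc (0:ℝ) 1, HasDerivWithinAt ψ (vf B γ t (ψ t)) (Icc 0 1) t)
    (h0 : φ 0 = ψ 0) : EqOn φ ψ (Icc (0:ℝ) 1) := by
  obtain ⟨K, hK⟩ := exists_lipschitz B γ hγ hB
  have derivmod : ∀ (χ : ℝ → Fin n → ℝ),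
      (∀ t ∈ Icc (0:ℝ) 1, HasDerivWithinAt χ (vf B γ t (χ t)) (Icc 0 1) t) →
      ∀ t ∈ Ico (0:ℝ) 1, HasDerivWithinAt χ (vf B γ t (χ t)) (Ici t) t := by
    intro χ hχ t ht
    apply (hχ t ⟨ht.1, ht.2.le⟩).mono_of_mem_nhdsWithin
    apply mem_nhdsWithin.2 ⟨Iio 1, isOpen_Iio, ht.2, ?_⟩
    rintro s ⟨hs1, hs2⟩
    exact ⟨le_trans ht.1 hs2, le_of_lt hs1⟩
  exact ODE_solution_unique_of_mem_Icc_right (v := vf B γ) (s := fun _ => univ)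
    (fun t _ => (hK t).lipschitzOnWith)
    (fun t ht => (hφ t ht).continuousWithinAt) (derivmod φ hφ) (fun _ _ => mem_univ _)
    (fun t ht => (hψ t ht).continuousWithinAt) (derivmod ψ hψ) (fun _ _ => mem_univ _) h0

include hγ hB in
theorem transport_exists (v : Fin n → ℝ) : ∃ w, Transports B γ v w := by
  obtain ⟨φ, hφ0, hφ⟩ := vf_exists B γ hγ hB v
  exact ⟨φ 1, φ, (solves_iff B γ φ).2 hφ, hφ0, rfl⟩

include hγ hB in
theorem transport_unique {v w₁ w₂ : Fin n → ℝ}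
    (h1 : Transports B γ v w₁) (h2 : Transports B γ v w₂) : w₁ = w₂ := by
  obtain ⟨φ, hφ, hφ0, hφ1⟩ := h1
  obtain ⟨ψ, hψ, hψ0, hψ1⟩ := h2
  have := vf_unique B γ hγ hB ((solves_iff B γ φ).1 hφ) ((solves_iff B γ ψ).1 hψ)
    (hφ0.trans hψ0.symm) ⟨zero_le_one, le_refl (1:ℝ)⟩
  rw [← hφ1, ← hψ1, this]


theorem transport_linear {a : ℝ} {v₁ v₂ w₁ w₂ : Fin n → ℝ}
    (h1 : Transports B γ v₁ w₁) (h2 : Transports B γ v₂ w₂) :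
    Transports B γ (a • v₁ + v₂) (a • w₁ + w₂) := by
  obtain ⟨φ, hφ, hφ0, hφ1⟩ := h1
  obtain ⟨ψ, hψ, hψ0, hψ1⟩ := h2
  refine ⟨fun t => a • φ t + ψ t, ?_, ?_, ?_⟩
  · rw [solves_iff] at hφ hψ ⊢
    intro t ht
    have h := ((hφ t ht).const_smul a).add (hψ t ht)
    have heq : vf B γ t (a • φ t + ψ t) = a • vf B γ t (φ t) + vf B γ t (ψ t) :=
      Fb_smul_add B _ _ a _ _
    rw [heq]
    exact h
  · show a • φ 0 + ψ 0 = a • v₁ + v₂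
    rw [hφ0, hψ0]
  · show a • φ 1 + ψ 1 = a • w₁ + w₂
    rw [hφ1, hψ1]

end VF


section Curves
variable {d n : ℕ} (B : Pt d → Fin n → Fin d → Fin n → ℝ) {Ω : Set (Pt d)} {x y z : Pt d}


theorem solvesTransport_of {γ : ℝ → Pt d} {φ : ℝ → Fin n → ℝ}
    (h : ∀ t ∈ Icc (0:ℝ) 1, HasDerivWithinAt φ
      (Fb B (γ t) (derivWithin γ (Icc 0 1) t) (φ t)) (Icc 0 1) t) :
    SolvesTransport B γ φ := h

theorem solvesTransport_to {γ : ℝ → Pt d} {φ : ℝ → Fin n → ℝ} (h : SolvesTransport B γ φ) :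
    ∀ t ∈ Icc (0:ℝ) 1, HasDerivWithinAt φ
      (Fb B (γ t) (derivWithin γ (Icc 0 1) t) (φ t)) (Icc 0 1) t := h

theorem hasDerivWithin_curve {γ : ℝ → Pt d} (hγ : IsCurve Ω x y γ) :
    ∀ s ∈ Icc (0:ℝ) 1, HasDerivWithinAt γ (derivWithin γ (Icc 0 1) s) (Icc 0 1) s :=
  fun s hs => ((hγ.1.differentiableOn one_ne_zero) s hs).hasDerivWithinAt

/-- Reversed curve. -/
def rev (γ : ℝ → Pt d) : ℝ → Pt d := fun t => γ (1 - t)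

theorem maps_onesub : MapsTo (fun s : ℝ => 1 - s) (Icc 0 1) (Icc 0 1) := by
  rintro s ⟨h0, h1⟩
  exact ⟨by simp only; linarith, by simp only; linarith⟩

theorem isCurve_rev {γ : ℝ → Pt d} (hγ : IsCurve Ω x y γ) : IsCurve Ω y x (rev γ) := by
  refine ⟨?_, ?_, ?_, ?_⟩
  · exact hγ.1.comp ((contDiff_const.sub contDiff_id).contDiffOn) maps_onesub
  · intro t ht
    exact hγ.2.1 _ (maps_onesub ht)
  · show γ (1 - 0) = y
    rw [show (1:ℝ) - 0 = 1 by norm_num]; exact hγ.2.2.2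
  · show γ (1 - 1) = x
    rw [show (1:ℝ) - 1 = 0 by norm_num]; exact hγ.2.2.1

theorem rev_hasDeriv {γ : ℝ → Pt d} (hγ : IsCurve Ω x y γ) :
    ∀ t ∈ Icc (0:ℝ) 1, HasDerivWithinAt (rev γ)
      ((-1 : ℝ) • derivWithin γ (Icc 0 1) (1 - t)) (Icc 0 1) t := by
  intro t ht
  have ht' : 1 - t ∈ Icc (0:ℝ) 1 := maps_onesub ht
  have hneg : HasDerivWithinAt (fun s : ℝ => 1 - s) (-1 : ℝ) (Icc 0 1) t := by
    simpa using ((hasDerivAt_id t).const_sub 1).hasDerivWithinAt (s := Icc 0 1)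
  exact HasDerivWithinAt.scomp t (hasDerivWithin_curve hγ _ ht') hneg maps_onesub

theorem transports_rev {γ : ℝ → Pt d} (hγ : IsCurve Ω x y γ) {v w : Fin n → ℝ}
    (h : Transports B γ v w) : Transports B (rev γ) w v := by
  obtain ⟨φ, hφ, hφ0, hφ1⟩ := h
  refine ⟨fun t => φ (1 - t), ?_, ?_, ?_⟩
  · apply solvesTransport_of
    intro t ht
    have ht' : 1 - t ∈ Icc (0:ℝ) 1 := maps_onesub ht
    have hneg : HasDerivWithinAt (fun s : ℝ => 1 - s) (-1 : ℝ) (Icc 0 1) t := by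
      simpa using ((hasDerivAt_id t).const_sub 1).hasDerivWithinAt (s := Icc 0 1)
    have hφd := HasDerivWithinAt.scomp t (solvesTransport_to B hφ (1 - t) ht') hneg maps_onesub
    have hdw : derivWithin (rev γ) (Icc 0 1) t = (-1:ℝ) • derivWithin γ (Icc 0 1) (1 - t) :=
      (rev_hasDeriv hγ t ht).derivWithin (uniqueDiffOn_Icc (by norm_num) t ht)
    have hr : rev γ t = γ (1 - t) := rfl
    rw [hr, hdw, Fb_smul_right]
    exact hφd
  · show φ (1 - 0) = w
    rw [show (1:ℝ) - 0 = 1 by norm_num]; exact hφ1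
  · show φ (1 - 1) = v
    rw [show (1:ℝ) - 1 = 0 by norm_num]; exact hφ0

/-- Smoothstep reparametrization. -/
def sg (t : ℝ) : ℝ := 3*t^2 - 2*t^3

def sg' (t : ℝ) : ℝ := 6*t - 6*t^2

theorem sg_hasDeriv (t : ℝ) : HasDerivAt sg (sg' t) t := by
  have h := ((hasDerivAt_pow 2 t).const_mul 3).sub ((hasDerivAt_pow 3 t).const_mul 2)
  refine h.congr_deriv ?_
  unfold sg'; push_cast; ring

theorem continuous_sg' : Continuous sg' := by
  unfold sg'; continuity

theorem sg_maps : MapsTo sg (Icc 0 1) (Icc 0 1) := by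
  rintro t ⟨h0, h1⟩
  unfold sg
  constructor
  · nlinarith [mul_nonneg (sq_nonneg t) (by linarith : (0:ℝ) ≤ 3 - 2*t)]
  · nlinarith [mul_nonneg (sq_nonneg (1-t)) (by linarith : (0:ℝ) ≤ 1 + 2*t)]

theorem sg_zero : sg 0 = 0 := by norm_num [sg]
theorem sg_one : sg 1 = 1 := by norm_num [sg]
theorem sg'_zero : sg' 0 = 0 := by norm_num [sg']
theorem sg'_one : sg' 1 = 0 := by norm_num [sg']

def r1 (t : ℝ) : ℝ := sg (2*t)
def r2 (t : ℝ) : ℝ := sg (2*t - 1)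

theorem r1_hasDeriv (t : ℝ) : HasDerivAt r1 (sg' (2*t) * 2) t := by
  have h2 : HasDerivAt (fun s : ℝ => 2*s) 2 t := by
    simpa using (hasDerivAt_id t).const_mul 2
  exact (sg_hasDeriv (2*t)).comp t h2

theorem r2_hasDeriv (t : ℝ) : HasDerivAt r2 (sg' (2*t - 1) * 2) t := by
  have h2 : HasDerivAt (fun s : ℝ => 2*s - 1) 2 t := by
    have := ((hasDerivAt_id t).const_mul 2).sub_const 1
    refine this.congr_deriv ?_
    norm_num
  exact (sg_hasDeriv (2*t - 1)).comp t h2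

theorem r1_maps : MapsTo r1 (Icc 0 (2⁻¹:ℝ)) (Icc 0 1) := by
  rintro t ⟨h0, h1⟩
  exact sg_maps ⟨by linarith, by linarith⟩

theorem r2_maps : MapsTo r2 (Icc (2⁻¹:ℝ) 1) (Icc 0 1) := by
  rintro t ⟨h0, h1⟩
  exact sg_maps ⟨by linarith, by linarith⟩

/-- Concatenation of two curves with flat reparametrization. -/
def cat (α β : ℝ → Pt d) : ℝ → Pt d :=
  fun t => if t ≤ 2⁻¹ then α (r1 t) else β (r2 t)

def dcat (α β : ℝ → Pt d) : ℝ → Pt d :=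
  fun t => if t ≤ 2⁻¹ then (sg' (2*t) * 2) • derivWithin α (Icc 0 1) (r1 t)
    else (sg' (2*t - 1) * 2) • derivWithin β (Icc 0 1) (r2 t)

variable {α β : ℝ → Pt d}

theorem dcat_right (hα : IsCurve Ω x z α) :
    ∀ t ∈ Icc (2⁻¹:ℝ) 1, dcat α β t
      = (sg' (2*t - 1) * 2) • derivWithin β (Icc 0 1) (r2 t) := by
  intro t ht
  rcases eq_or_lt_of_le ht.1 with h'|h'
  · have h1 : (2:ℝ)*t = 1 := by rw [← h']; norm_num
    have h2 : (2:ℝ)*t - 1 = 0 := by rw [h1]; ring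
    unfold dcat
    rw [if_pos (le_of_eq h'.symm), h2, h1, sg'_one, sg'_zero]
    simp
  · unfold dcat
    rw [if_neg (not_le.mpr h')]

theorem cat_hasDeriv (hα : IsCurve Ω x z α) (hβ : IsCurve Ω z y β) :
    ∀ t ∈ Icc (0:ℝ) 1, HasDerivWithinAt (cat α β) (dcat α β t) (Icc 0 1) t := by
  have h2 : (0:ℝ) ≤ 2⁻¹ := by norm_num
  have h3 : (2⁻¹:ℝ) ≤ 1 := by norm_num
  apply glueDeriv h2 h3
  · intro t ht
    have hcomp : HasDerivWithinAt (fun s => α (r1 s))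
        ((sg' (2*t)*2) • derivWithin α (Icc 0 1) (r1 t)) (Icc 0 2⁻¹) t :=
      HasDerivWithinAt.scomp t (hasDerivWithin_curve hα _ (r1_maps ht))
        ((r1_hasDeriv t).hasDerivWithinAt) r1_maps
    have heq : ∀ s ∈ Icc (0:ℝ) 2⁻¹, cat α β s = α (r1 s) := by
      intro s hs; exact if_pos hs.2
    have hval : dcat α β t = (sg' (2*t)*2) • derivWithin α (Icc 0 1) (r1 t) := if_pos ht.2
    rw [hval]
    exact hcomp.congr heq (heq t ht)
  · intro t ht
    have hcomp : HasDerivWithinAt (fun s => β (r2 s))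
        ((sg' (2*t - 1)*2) • derivWithin β (Icc 0 1) (r2 t)) (Icc 2⁻¹ 1) t :=
      HasDerivWithinAt.scomp t (hasDerivWithin_curve hβ _ (r2_maps ht))
        ((r2_hasDeriv t).hasDerivWithinAt) r2_maps
    have heq : ∀ s ∈ Icc (2⁻¹:ℝ) 1, cat α β s = β (r2 s) := by
      intro s hs
      rcases eq_or_lt_of_le hs.1 with h'|h'
      · have h1 : r1 s = 1 := by unfold r1; rw [← h']; norm_num [sg]
        have h1' : r2 s = 0 := by unfold r2; rw [← h']; norm_num [sg]
        unfold cat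
        rw [if_pos (le_of_eq h'.symm), h1, h1', hα.2.2.2, hβ.2.2.1]
      · unfold cat
        rw [if_neg (not_le.mpr h')]
    rw [dcat_right hα t ht]
    exact hcomp.congr heq (heq t ht)

theorem continuousOn_dcat (hα : IsCurve Ω x z α) (hβ : IsCurve Ω z y β) :
    ContinuousOn (dcat α β) (Icc (0:ℝ) 1) := by
  have hsplit : Icc (0:ℝ) 1 = Icc 0 2⁻¹ ∪ Icc 2⁻¹ 1 :=
    (Icc_union_Icc_eq_Icc (by norm_num) (by norm_num)).symm
  rw [hsplit]
  apply continuousOn_union_closed isClosed_Icc isClosed_Icc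
  · apply ContinuousOn.congr (f := fun t => (sg' (2*t)*2) • derivWithin α (Icc 0 1) (r1 t))
    · apply ContinuousOn.fun_smul
      · exact ((continuous_sg'.comp (continuous_const.mul continuous_id)).mul
          continuous_const).continuousOn
      · exact (hα.1.continuousOn_derivWithin (uniqueDiffOn_Icc (by norm_num)) le_rfl).comp
          (Continuous.continuousOn (by unfold r1 sg; continuity)) r1_maps
    · intro s hs; exact if_pos hs.2
  · apply ContinuousOn.congr (f := fun t => (sg' (2*t - 1)*2) • derivWithin β (Icc 0 1) (r2 t))
    · apply ContinuousOn.fun_smul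
      · exact ((continuous_sg'.comp ((continuous_const.mul continuous_id).sub
          continuous_const)).mul continuous_const).continuousOn
      · exact (hβ.1.continuousOn_derivWithin (uniqueDiffOn_Icc (by norm_num)) le_rfl).comp
          (Continuous.continuousOn (by unfold r2 sg; continuity)) r2_maps
    · intro s hs; exact dcat_right hα s hs

theorem isCurve_cat (hα : IsCurve Ω x z α) (hβ : IsCurve Ω z y β) :
    IsCurve Ω x y (cat α β) := by
  refine ⟨?_, ?_, ?_, ?_⟩
  · exact contDiffOn_Icc_of_deriv (by norm_num) (continuousOn_dcat hα hβ)
      (cat_hasDeriv hα hβ)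
  · intro t ht
    unfold cat
    split_ifs with h
    · exact hα.2.1 _ (r1_maps ⟨ht.1, h⟩)
    · exact hβ.2.1 _ (r2_maps ⟨(not_le.mp h).le, ht.2⟩)
  · show (if (0:ℝ) ≤ 2⁻¹ then α (r1 0) else β (r2 0)) = x
    rw [if_pos (by norm_num : (0:ℝ) ≤ 2⁻¹)]
    have : r1 0 = 0 := by unfold r1; rw [mul_zero, sg_zero]
    rw [this, hα.2.2.1]
  · show (if (1:ℝ) ≤ 2⁻¹ then α (r1 1) else β (r2 1)) = y
    rw [if_neg (by norm_num : ¬ (1:ℝ) ≤ 2⁻¹)]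
    have : r2 1 = 1 := by unfold r2; rw [show (2:ℝ)*1-1 = 1 by norm_num, sg_one]
    rw [this, hβ.2.2.2]

theorem transports_cat (hα : IsCurve Ω x z α) (hβ : IsCurve Ω z y β)
    {v w u : Fin n → ℝ} (h1 : Transports B α v w) (h2 : Transports B β w u) :
    Transports B (cat α β) v u := by
  obtain ⟨φ, hφ, hφ0, hφ1⟩ := h1
  obtain ⟨ψ, hψ, hψ0, hψ1⟩ := h2
  have hud := uniqueDiffOn_Icc (show (0:ℝ) < 1 by norm_num)
  have hdcat : ∀ t ∈ Icc (0:ℝ) 1, derivWithin (cat α β) (Icc 0 1) t = dcat α β t :=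
    fun t ht => (cat_hasDeriv hα hβ t ht).derivWithin (hud t ht)
  refine ⟨fun t => if t ≤ 2⁻¹ then φ (r1 t) else ψ (r2 t), ?_, ?_, ?_⟩
  · apply solvesTransport_of
    have h2' : (0:ℝ) ≤ 2⁻¹ := by norm_num
    have h3 : (2⁻¹:ℝ) ≤ 1 := by norm_num
    apply glueDeriv h2' h3 (g := fun t => Fb B (cat α β t) (derivWithin (cat α β) (Icc 0 1) t)
      ((fun t => if t ≤ 2⁻¹ then φ (r1 t) else ψ (r2 t)) t))
    · intro t ht
      have hcomp := HasDerivWithinAt.scomp t (solvesTransport_to B hφ _ (r1_maps ht))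
        ((r1_hasDeriv t).hasDerivWithinAt) r1_maps
      have heq : ∀ s ∈ Icc (0:ℝ) 2⁻¹,
          (fun t => if t ≤ 2⁻¹ then φ (r1 t) else ψ (r2 t)) s = φ (r1 s) := by
        intro s hs; exact if_pos hs.2
      have hval : Fb B (cat α β t) (derivWithin (cat α β) (Icc 0 1) t)
          ((fun t => if t ≤ 2⁻¹ then φ (r1 t) else ψ (r2 t)) t)
          = (sg' (2*t)*2) • Fb B (α (r1 t)) (derivWithin α (Icc 0 1) (r1 t)) (φ (r1 t)) := by
        rw [heq t ht, hdcat t ⟨ht.1, le_trans ht.2 h3⟩]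
        have hc : cat α β t = α (r1 t) := if_pos ht.2
        have hd : dcat α β t = (sg' (2*t)*2) • derivWithin α (Icc 0 1) (r1 t) := if_pos ht.2
        rw [hc, hd, Fb_smul_right]
      rw [hval]
      exact hcomp.congr heq (heq t ht)
    · intro t ht
      have hcomp := HasDerivWithinAt.scomp t (solvesTransport_to B hψ _ (r2_maps ht))
        ((r2_hasDeriv t).hasDerivWithinAt) r2_maps
      have heq : ∀ s ∈ Icc (2⁻¹:ℝ) 1,
          (fun t => if t ≤ 2⁻¹ then φ (r1 t) else ψ (r2 t)) s = ψ (r2 s) := by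
        intro s hs
        rcases eq_or_lt_of_le hs.1 with h'|h'
        · have ha : r1 s = 1 := by unfold r1; rw [← h']; norm_num [sg]
          have hb' : r2 s = 0 := by unfold r2; rw [← h']; norm_num [sg]
          show (if s ≤ 2⁻¹ then φ (r1 s) else ψ (r2 s)) = ψ (r2 s)
          rw [if_pos (le_of_eq h'.symm), ha, hb', hφ1, hψ0]
        · show (if s ≤ 2⁻¹ then φ (r1 s) else ψ (r2 s)) = ψ (r2 s)
          rw [if_neg (not_le.mpr h')]
      have hval : Fb B (cat α β t) (derivWithin (cat α β) (Icc 0 1) t)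
          ((fun t => if t ≤ 2⁻¹ then φ (r1 t) else ψ (r2 t)) t)
          = (sg' (2*t - 1)*2) • Fb B (β (r2 t)) (derivWithin β (Icc 0 1) (r2 t)) (ψ (r2 t)) := by
        rw [heq t ht, hdcat t ⟨le_trans h2' ht.1, ht.2⟩, dcat_right hα t ht]
        have hc : ∀ s ∈ Icc (2⁻¹:ℝ) 1, cat α β s = β (r2 s) := by
          intro s hs
          rcases eq_or_lt_of_le hs.1 with h'|h'
          · have ha : r1 s = 1 := by unfold r1; rw [← h']; norm_num [sg]
            have hb' : r2 s = 0 := by unfold r2; rw [← h']; norm_num [sg]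
            unfold cat
            rw [if_pos (le_of_eq h'.symm), ha, hb', hα.2.2.2, hβ.2.2.1]
          · unfold cat
            rw [if_neg (not_le.mpr h')]
        rw [hc t ht, Fb_smul_right]
      rw [hval]
      exact hcomp.congr heq (heq t ht)
  · show (if (0:ℝ) ≤ 2⁻¹ then φ (r1 0) else ψ (r2 0)) = v
    rw [if_pos (by norm_num : (0:ℝ) ≤ 2⁻¹)]
    have : r1 0 = 0 := by unfold r1; rw [mul_zero, sg_zero]
    rw [this, hφ0]
  · show (if (1:ℝ) ≤ 2⁻¹ then φ (r1 1) else ψ (r2 1)) = u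
    rw [if_neg (by norm_num : ¬ (1:ℝ) ≤ 2⁻¹)]
    have : r2 1 = 1 := by unfold r2; rw [show (2:ℝ)*1-1 = 1 by norm_num, sg_one]
    rw [this, hψ1]

end Curves


section Conn
variable {d : ℕ} {Ω : Set (Pt d)}

theorem isCurve_const {x : Pt d} (hx : x ∈ Ω) : IsCurve Ω x x (fun _ => x) :=
  ⟨contDiffOn_const, fun _ _ => hx, rfl, rfl⟩

theorem isCurve_segment {p q c : Pt d} {r : ℝ} (h : ball c r ⊆ Ω)
    (hp : p ∈ ball c r) (hq : q ∈ ball c r) :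
    IsCurve Ω p q (fun t => p + t • (q - p)) := by
  refine ⟨?_, ?_, ?_, ?_⟩
  · exact (contDiff_const.add (contDiff_id.smul contDiff_const)).contDiffOn
  · intro t ht
    apply h
    have hc := (convex_ball c r) hp hq (by linarith [ht.2] : (0:ℝ) ≤ 1 - t) ht.1 (by ring)
    convert hc using 1
    show p + t • (q - p) = (1 - t) • p + t • q
    rw [smul_sub, sub_smul, one_smul]
    abel
  · show p + (0:ℝ) • (q - p) = p
    rw [zero_smul, add_zero]
  · show p + (1:ℝ) • (q - p) = q
    rw [one_smul]
    abel

theorem exists_curve (hΩo : IsOpen Ω) (hΩc : IsConnected Ω) {x₁ x₂ : Pt d}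
    (h1 : x₁ ∈ Ω) (h2 : x₂ ∈ Ω) : ∃ γ, IsCurve Ω x₁ x₂ γ := by
  set S : Set (Pt d) := {y | y ∈ Ω ∧ ∃ γ, IsCurve Ω x₁ y γ} with hS
  set T : Set (Pt d) := {y | y ∈ Ω ∧ ¬ ∃ γ, IsCurve Ω x₁ y γ} with hT
  have hSopen : IsOpen S := by
    rw [Metric.isOpen_iff]
    rintro y ⟨hyΩ, γ, hγ⟩
    obtain ⟨r, hr0, hball⟩ := Metric.isOpen_iff.mp hΩo y hyΩ
    refine ⟨r, hr0, fun w hw => ⟨hball hw, ?_⟩⟩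
    exact ⟨cat γ (fun t => y + t • (w - y)),
      isCurve_cat hγ (isCurve_segment hball (mem_ball_self hr0) hw)⟩
  have hTopen : IsOpen T := by
    rw [Metric.isOpen_iff]
    rintro y ⟨hyΩ, hn⟩
    obtain ⟨r, hr0, hball⟩ := Metric.isOpen_iff.mp hΩo y hyΩ
    refine ⟨r, hr0, fun w hw => ⟨hball hw, ?_⟩⟩
    rintro ⟨γ, hγ⟩
    exact hn ⟨cat γ (fun t => w + t • (y - w)),
      isCurve_cat hγ (isCurve_segment hball hw (mem_ball_self hr0))⟩
  by_contra hcon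
  have hx1S : x₁ ∈ S := ⟨h1, ⟨_, isCurve_const h1⟩⟩
  have hx2T : x₂ ∈ T := ⟨h2, hcon⟩
  obtain ⟨u, hu⟩ := hΩc.isPreconnected S T hSopen hTopen
    (fun w hw => (em (∃ γ, IsCurve Ω x₁ w γ)).imp (fun h => ⟨hw, h⟩) (fun h => ⟨hw, h⟩))
    ⟨x₁, h1, hx1S⟩ ⟨x₂, h2, hx2T⟩
  exact hu.2.2.2 hu.2.1.2

end Conn

section Main
variable {d n : ℕ} {Ω : Set (Pt d)} {B : Pt d → Fin n → Fin d → Fin n → ℝ}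

theorem finrank_le_of_curve (hB : ContinuousOn B (closure Ω)) {x₁ x₂ : Pt d}
    {δ : ℝ → Pt d} (hδ : IsCurve Ω x₁ x₂ δ) :
    Module.finrank ℝ (Submodule.span ℝ (EB Ω B x₁)) ≤
      Module.finrank ℝ (Submodule.span ℝ (EB Ω B x₂)) := by
  have hex : ∀ v : Fin n → ℝ, ∃ w, Transports B δ v w := transport_exists B δ hδ hB
  choose Tr hT using hex
  have huniq : ∀ v w, Transports B δ v w → w = Tr v :=
    fun v w h => transport_unique B δ hδ hB h (hT v)
  have hzero : Transports B δ 0 0 := by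
    refine ⟨fun _ => 0, ?_, rfl, rfl⟩
    apply solvesTransport_of
    intro t ht
    rw [Fb_zero]
    exact hasDerivWithinAt_const t _ 0
  have hT0 : Tr 0 = 0 := (huniq 0 0 hzero).symm
  have hadd : ∀ (a:ℝ) v₁ v₂, Tr (a • v₁ + v₂) = a • Tr v₁ + Tr v₂ := by
    intro a v₁ v₂
    exact (huniq _ _ (transport_linear B δ (hT v₁) (hT v₂))).symm
  set L : (Fin n → ℝ) →ₗ[ℝ] (Fin n → ℝ) :=
    { toFun := Tr
      map_add' := by
        intro u v
        have h := hadd 1 u v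
        rwa [one_smul, one_smul] at h
      map_smul' := by
        intro a v
        have h := hadd a v 0
        rw [add_zero, hT0, add_zero] at h
        exact h } with hL
  have hrev := isCurve_rev hδ
  have hinj : Function.Injective L := by
    have hexr : ∀ v : Fin n → ℝ, ∃ w, Transports B (rev δ) v w :=
      transport_exists B (rev δ) hrev hB
    choose Tr' hT' using hexr
    have hleft : ∀ v, Tr' (Tr v) = v := by
      intro v
      exact transport_unique B (rev δ) hrev hB (hT' (Tr v)) (transports_rev B hδ (hT v))
    intro u v huv
    have h1 : Tr u = Tr v := huv
    have h2 := hleft u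
    rw [h1, hleft v] at h2
    exact h2.symm
  have himg : ∀ v ∈ EB Ω B x₁, Tr v ∈ EB Ω B x₂ := by
    intro v hv y hy γ₁ γ₂ hγ₁ hγ₂ w₁ w₂ ht1 ht2
    exact hv y hy (cat δ γ₁) (cat δ γ₂) (isCurve_cat hδ hγ₁) (isCurve_cat hδ hγ₂) w₁ w₂
      (transports_cat B hδ hγ₁ (hT v) ht1) (transports_cat B hδ hγ₂ (hT v) ht2)
  have hbij : Function.Bijective L := ⟨hinj, (LinearMap.injective_iff_surjective).mp hinj⟩
  set e := LinearEquiv.ofBijective L hbij with he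
  have hsub : (e : (Fin n → ℝ) →ₗ[ℝ] (Fin n → ℝ)) '' (EB Ω B x₁) ⊆ EB Ω B x₂ := by
    rintro _ ⟨v, hv, rfl⟩
    exact himg v hv
  calc Module.finrank ℝ (Submodule.span ℝ (EB Ω B x₁))
      = Module.finrank ℝ (Submodule.map (e : (Fin n → ℝ) →ₗ[ℝ] (Fin n → ℝ))
          (Submodule.span ℝ (EB Ω B x₁))) := (LinearEquiv.finrank_map_eq e _).symm
    _ = Module.finrank ℝ (Submodule.span ℝ
          ((e : (Fin n → ℝ) →ₗ[ℝ] (Fin n → ℝ)) '' (EB Ω B x₁))) := by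
          rw [Submodule.span_image]
    _ ≤ Module.finrank ℝ (Submodule.span ℝ (EB Ω B x₂)) :=
          Submodule.finrank_mono (Submodule.span_mono hsub)

theorem EB_dim_independent_of_basepoint'
    (hn : 1 ≤ n)
    (hΩo : IsOpen Ω) (hΩc : IsConnected Ω)
    (hB : ContinuousOn B (closure Ω)) :
    ∀ x₁ ∈ Ω, ∀ x₂ ∈ Ω,
      Module.finrank ℝ (Submodule.span ℝ (EB Ω B x₁)) =
      Module.finrank ℝ (Submodule.span ℝ (EB Ω B x₂)) := by
  intro x₁ h1 x₂ h2
  obtain ⟨δ, hδ⟩ := exists_curve hΩo hΩc h1 h2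
  exact le_antisymm (finrank_le_of_curve hB hδ) (finrank_le_of_curve hB (isCurve_rev hδ))

end Main

/-- the dimension of `E_B^x` is independent of the base point,
Proposition `dimconst`. -/
theorem EB_dim_independent_of_basepoint
    {d n : ℕ} (hn : 1 ≤ n)
    (Ω : Set (Pt d)) (hΩo : IsOpen Ω) (hΩc : IsConnected Ω)
    (B : Pt d → Fin n → Fin d → Fin n → ℝ) (hB : ContinuousOn B (closure Ω)) :
    ∀ x₁ ∈ Ω, ∀ x₂ ∈ Ω,
      Module.finrank ℝ (Submodule.span ℝ (EB Ω B x₁)) =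
      Module.finrank ℝ (Submodule.span ℝ (EB Ω B x₂)) := by
  exact EB_dim_independent_of_basepoint' hn hΩo hΩc hB

end
end

section
/- Let H be a Hilbert space, F a normed vector space, and (A_ℓ)_{ℓ∈ℕ} a sequence of bounded linear operators from H to F converging to A in operator norm. Assume that A has closed range in the quantitative sense that there exists C > 0 with ‖v‖_H ≤ C ‖Av‖_F for all v in the orthogonal complement of the null space N(A), and that there exists k ∈ ℕ with dim N(A_ℓ) ≥ k for all ℓ. Then dim N(A) ≥ k. -/
noncomputable section

/-- lower semicontinuity of the kernel dimension under operator-norm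
convergence towards a closed-range operator, Lemma `lemmaLp`. -/
theorem kernel_dim_lsc_of_closed_range
    {𝕜 : Type*} [RCLike 𝕜] {H F : Type*}
    [NormedAddCommGroup H] [InnerProductSpace 𝕜 H] [CompleteSpace H]
    [NormedAddCommGroup F] [NormedSpace 𝕜 F]
    (A : H →L[𝕜] F) (Aseq : ℕ → H →L[𝕜] F)
    (hconv : Filter.Tendsto (fun ℓ => ‖Aseq ℓ - A‖) Filter.atTop (nhds 0))
    (C : ℝ) (hC : 0 < C)
    (hclosed : ∀ v ∈ (LinearMap.ker (A : H →ₗ[𝕜] F))ᗮ, ‖v‖ ≤ C * ‖A v‖)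
    (k : ℕ) (hk : ∀ ℓ, (k : Cardinal) ≤ Module.rank 𝕜 (LinearMap.ker (Aseq ℓ : H →ₗ[𝕜] F))) :
    (k : Cardinal) ≤ Module.rank 𝕜 (LinearMap.ker (A : H →ₗ[𝕜] F)) := by
  by_contra h
  push_neg at h
  -- ker A is finite dimensional
  have hfin : FiniteDimensional 𝕜 (LinearMap.ker (A : H →ₗ[𝕜] F)) := by
    rw [FiniteDimensional, ← Module.rank_lt_aleph0_iff]
    exact h.trans (Cardinal.nat_lt_aleph0 k)
  -- choose ℓ with ‖Aseq ℓ - A‖ < C⁻¹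
  obtain ⟨ℓ, hℓ⟩ := (hconv.eventually (gt_mem_nhds (by positivity : (0:ℝ) < C⁻¹))).exists
  -- orthogonal projection onto ker A is injective on ker (Aseq ℓ)
  set K := LinearMap.ker (A : H →ₗ[𝕜] F)
  have hinj : Function.Injective
      (((K.orthogonalProjectionOnto).toLinearMap.comp (LinearMap.ker (Aseq ℓ : H →ₗ[𝕜] F)).subtype) :
        LinearMap.ker (Aseq ℓ : H →ₗ[𝕜] F) →ₗ[𝕜] K) := by
    rw [← LinearMap.ker_eq_bot, LinearMap.ker_eq_bot']
    rintro ⟨v, hv⟩ hv0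
    have hv0' : K.orthogonalProjectionOnto v = 0 := by
      simpa using hv0
    have hvperp : v ∈ Kᗮ := by
      rwa [Submodule.orthogonalProjectionOnto_eq_zero_iff] at hv0'
    have hAv : A v = (A - Aseq ℓ) v := by
      simp [show (Aseq ℓ) v = 0 from LinearMap.mem_ker.mp hv]
    have h1 : ‖v‖ ≤ C * ‖A v‖ := hclosed v hvperp
    have h2 : ‖(A - Aseq ℓ) v‖ ≤ ‖A - Aseq ℓ‖ * ‖v‖ := (A - Aseq ℓ).le_opNorm v
    have h3 : ‖A - Aseq ℓ‖ = ‖Aseq ℓ - A‖ := by rw [← norm_neg]; congr 1; abel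
    by_contra hvne
    have hvpos : 0 < ‖v‖ := by
      simp only [norm_pos_iff]
      intro hz
      apply hvne
      simp [hz]
    have : ‖v‖ < ‖v‖ := by
      calc ‖v‖ ≤ C * ‖A v‖ := h1
        _ = C * ‖(A - Aseq ℓ) v‖ := by rw [hAv]
        _ ≤ C * (‖A - Aseq ℓ‖ * ‖v‖) := by
            exact mul_le_mul_of_nonneg_left h2 hC.le
        _ < C * (C⁻¹ * ‖v‖) := by
            apply mul_lt_mul_of_pos_left _ hC
            exact mul_lt_mul_of_pos_right (h3 ▸ hℓ) hvpos
        _ = ‖v‖ := by field_simp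
    exact absurd this (lt_irrefl _)
  exact h.not_ge ((hk ℓ).trans (LinearMap.rank_le_of_injective _ hinj))

end
end
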